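/- arXiv:2011.09049 — 2 statements merged into one kernel-verified Lean document; each statement's English description precedes it below -/
import Mathlib

section
/- Let v be an additive game on a rooted tree with root r (depth 0): v(E)=∑_{i∈E} v_i with all v_i≥0. Under the tree permission structure with projection v'(E)=v(α(E)), the Shapley value of player i in v' equals φ'_i = ∑_{k∈T_i} v_k/(d_k+1), where T_i is the set of players in the subtree rooted at i and d_k is the depth of k. -/
open Finset
open scoped Classical

/-- Harsanyi dividend of coalition `E` in game `v`. -/
noncomputable def dividend {α : Type*} [DecidableEq α] (v : Finset α → ℝ) (E : Finset α) : ℝ :=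
  ∑ F ∈ E.powerset, (-1 : ℝ) ^ (E.card - F.card) * v F

/-- Weighted Shapley value with weights `ω`. -/
noncomputable def wShapley {α : Type*} [Fintype α] [DecidableEq α]
    (ω : α → ℝ) (v : Finset α → ℝ) (i : α) : ℝ :=
  ∑ E ∈ (univ : Finset α).powerset,
    if i ∈ E then dividend v E * ω i / (∑ j ∈ E, ω j) else 0

/-- Ordinary Shapley value. -/
noncomputable def shapley {α : Type*} [Fintype α] [DecidableEq α]
    (v : Finset α → ℝ) (i : α) : ℝ :=
  wShapley (fun _ => 1) v i

/-- `E` is autonomous in the permission structure `S`. -/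
def autonomous {α : Type*} (S : α → Finset α) (E : Finset α) : Prop :=
  ∀ i ∈ E, S i ⊆ E

/-- The autonomous part `α(E)`: the union of all autonomous subsets of `E`. -/
noncomputable def autPart {α : Type*} [DecidableEq α] (S : α → Finset α) (E : Finset α) :
    Finset α :=
  (E.powerset.filter (autonomous S)).sup id

/-- The projection of `v` on the permission structure `S`. -/
noncomputable def proj {α : Type*} [DecidableEq α] (S : α → Finset α) (v : Finset α → ℝ)
    (E : Finset α) : ℝ :=
  v (autPart S E)

/-!
The projected game is a combination of unanimity games, `v'(E) = ∑ₖ cₖ u_{Pₖ}(E)` with `Pₖ` the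
path from `k` to the root, since `k ∈ α(E)` exactly when `Pₖ ⊆ E`. The Harsanyi dividends of
`u_P` are the indicator of `P`, so the Shapley value of `u_P` splits `1` equally among the `|P|`
members of `P`. Player `i` lies on `Pₖ` exactly when `k` is in the subtree of `i`, and
`|Pₖ| = dₖ + 1` because the depth drops by one along each step of the path.
-/

section Games

variable {α : Type*} [DecidableEq α]

noncomputable def unanimity (T E : Finset α) : ℝ :=
  if T ⊆ E then 1 else 0

lemma dividend_eq_sum_powerset_sdiff (v : Finset α → ℝ) (E : Finset α) :
    dividend v E = ∑ F ∈ E.powerset, (-1 : ℝ) ^ #F * v (E \ F) := by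
  refine sum_nbij' (E \ ·) (E \ ·) (by simp) (by simp)
    (fun F hF => Finset.sdiff_sdiff_eq_self (mem_powerset.1 hF))
    (fun F hF => Finset.sdiff_sdiff_eq_self (mem_powerset.1 hF)) fun F hF => ?_
  have hFE := mem_powerset.1 hF
  simp only [card_sdiff_of_subset hFE, Finset.sdiff_sdiff_eq_self hFE]

lemma sum_powerset_neg_one_pow_card_real (X : Finset α) :
    ∑ F ∈ X.powerset, (-1 : ℝ) ^ #F = if X = ∅ then 1 else 0 := by
  have h := congrArg (Int.cast : ℤ → ℝ) (sum_powerset_neg_one_pow_card (x := X))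
  push_cast at h
  simpa [apply_ite (Int.cast : ℤ → ℝ)] using h

lemma dividend_unanimity (T E : Finset α) :
    dividend (unanimity T) E = if E = T then 1 else 0 := by
  rw [dividend_eq_sum_powerset_sdiff]
  by_cases hTE : T ⊆ E
  · have hterm : ∀ F ∈ E.powerset, (-1 : ℝ) ^ #F * unanimity T (E \ F)
        = if F ∈ (E \ T).powerset then (-1 : ℝ) ^ #F else 0 := by
      intro F hF
      have : T ⊆ E \ F ↔ F ⊆ E \ T := by
        simp only [subset_sdiff, hTE, (mem_powerset.1 hF), true_and, disjoint_comm]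
      simp [unanimity, this]
    rw [sum_congr rfl hterm, sum_ite_mem, inter_eq_right.2 (powerset_mono.2 sdiff_subset),
      sum_powerset_neg_one_pow_card_real]
    exact if_congr (sdiff_eq_empty_iff_subset.trans ⟨fun h => h.antisymm hTE, fun h => h.le⟩)
      rfl rfl
  · rw [if_neg fun h => hTE h.ge]
    refine sum_eq_zero fun F _ => ?_
    rw [unanimity, if_neg fun h => hTE (h.trans sdiff_subset), mul_zero]

lemma dividend_sum_mul {ι : Type*} (s : Finset ι) (a : ι → ℝ) (f : ι → Finset α → ℝ)
    (E : Finset α) :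
    dividend (fun F => ∑ k ∈ s, a k * f k F) E = ∑ k ∈ s, a k * dividend (f k) E := by
  simp only [dividend, mul_sum]
  rw [sum_comm]
  exact sum_congr rfl fun _ _ => sum_congr rfl fun _ _ => by ring

variable [Fintype α]

lemma wShapley_sum_mul {ι : Type*} (ω : α → ℝ) (s : Finset ι) (a : ι → ℝ)
    (f : ι → Finset α → ℝ) (i : α) :
    wShapley ω (fun F => ∑ k ∈ s, a k * f k F) i = ∑ k ∈ s, a k * wShapley ω (f k) i := by
  simp only [wShapley, dividend_sum_mul, mul_sum]
  rw [sum_comm]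
  refine sum_congr rfl fun E _ => ?_
  split_ifs
  · rw [sum_mul, sum_div]
    exact sum_congr rfl fun _ _ => by ring
  · simp

lemma wShapley_unanimity (ω : α → ℝ) (T : Finset α) (i : α) :
    wShapley ω (unanimity T) i = if i ∈ T then ω i / ∑ j ∈ T, ω j else 0 := by
  rw [wShapley, sum_eq_single_of_mem T (mem_powerset.2 (subset_univ T))]
  · simp [dividend_unanimity]
  · intro E _ hET
    simp [dividend_unanimity, hET]

lemma shapley_sum_mul_unanimity {ι : Type*} (s : Finset ι) (a : ι → ℝ) (T : ι → Finset α)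
    (i : α) :
    shapley (fun E => ∑ k ∈ s, a k * unanimity (T k) E) i
      = ∑ k ∈ s with i ∈ T k, a k / #(T k) := by
  rw [shapley, wShapley_sum_mul, sum_filter]
  refine sum_congr rfl fun k _ => ?_
  rw [wShapley_unanimity]
  split_ifs <;> simp [div_eq_mul_inv]

end Games

section Permission

variable {α : Type*} [DecidableEq α]

lemma autPart_eq_of_forall_subset {S : α → Finset α} {E A : Finset α} (hAE : A ⊆ E)
    (hA : autonomous S A) (hmax : ∀ F ⊆ E, autonomous S F → F ⊆ A) : autPart S E = A :=
  le_antisymm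
    (Finset.sup_le fun F hF =>
      (mem_filter.1 hF).elim fun hFE hF => hmax F (mem_powerset.1 hFE) hF)
    (le_sup (f := id) (mem_filter.2 ⟨mem_powerset.2 hAE, hA⟩))

lemma autonomous_tree_iff {r : α} {p : α → α} (F : Finset α) :
    autonomous (fun i => if i = r then ∅ else {p i}) F ↔
      ∀ i ∈ F, i ≠ r → p i ∈ F := by
  refine forall₂_congr fun i _ => ?_
  dsimp only
  split_ifs with h <;> simp [h]

end Permission

section Depth

variable {α : Type*} {r : α} {p : α → α} {d : α → ℕ}

lemma depth_iterate (hd0 : d r = 0) (hd : ∀ i : α, i ≠ r → d i = d (p i) + 1)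
    (k : α) {m : ℕ} (hm : m ≤ d k) : d (p^[m] k) = d k - m := by
  induction m with
  | zero => rfl
  | succ m ih =>
    have ih := ih (by omega)
    have hne : p^[m] k ≠ r := fun h => by rw [h, hd0] at ih; omega
    have := hd _ hne
    rw [Function.iterate_succ_apply']
    omega

lemma iterate_eq_root_of_depth_le (hr : p r = r) (hd0 : d r = 0)
    (hd : ∀ i : α, i ≠ r → d i = d (p i) + 1) (k : α) {m : ℕ} (hm : d k ≤ m) :
    p^[m] k = r := by
  have hroot : p^[d k] k = r := by
    by_contra h
    have := hd _ h
    rw [depth_iterate hd0 hd k le_rfl] at this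
    omega
  rw [← Nat.sub_add_cancel hm, Function.iterate_add_apply, hroot, Function.iterate_fixed hr]

end Depth

section Tree

variable {α : Type*} [Fintype α] {r : α} {p : α → α}

noncomputable def rootPath (p : α → α) (k : α) : Finset α :=
  {j | ∃ m : ℕ, p^[m] k = j}

lemma mem_rootPath {k j : α} : j ∈ rootPath p k ↔ ∃ m : ℕ, p^[m] k = j := by
  simp [rootPath]

lemma self_mem_rootPath (k : α) : k ∈ rootPath p k :=
  mem_rootPath.2 ⟨0, rfl⟩

lemma rootPath_apply_subset (k : α) : rootPath p (p k) ⊆ rootPath p k := fun _ hj =>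
  let ⟨m, hm⟩ := mem_rootPath.1 hj
  mem_rootPath.2 ⟨m + 1, hm⟩

lemma rootPath_eq_image_range {d : α → ℕ} (hr : p r = r) (hd0 : d r = 0)
    (hd : ∀ i : α, i ≠ r → d i = d (p i) + 1) (k : α) :
    rootPath p k = (range (d k + 1)).image (p^[·] k) := by
  ext j
  simp only [mem_rootPath, mem_image, mem_range]
  constructor
  · rintro ⟨m, rfl⟩
    by_cases hm : m ≤ d k
    · exact ⟨m, by omega, rfl⟩
    · refine ⟨d k, by omega, ?_⟩
      rw [iterate_eq_root_of_depth_le hr hd0 hd k le_rfl,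
        iterate_eq_root_of_depth_le hr hd0 hd k (by omega)]
  · rintro ⟨m, -, rfl⟩
    exact ⟨m, rfl⟩

lemma card_rootPath {d : α → ℕ} (hr : p r = r) (hd0 : d r = 0)
    (hd : ∀ i : α, i ≠ r → d i = d (p i) + 1) (k : α) : #(rootPath p k) = d k + 1 := by
  rw [rootPath_eq_image_range hr hd0 hd, card_image_of_injOn, card_range]
  intro m hm n hn h
  simp only [coe_range, Set.mem_Iio] at hm hn
  have := congrArg d h
  simp only at this
  rw [depth_iterate hd0 hd k (by omega), depth_iterate hd0 hd k (by omega)] at this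
  omega

variable [DecidableEq α]

lemma rootPath_subset_of_autonomous (hr : p r = r) {F : Finset α}
    (hF : ∀ i ∈ F, i ≠ r → p i ∈ F) {k : α} (hk : k ∈ F) : rootPath p k ⊆ F := by
  have hiter : ∀ m : ℕ, p^[m] k ∈ F := by
    intro m
    induction m with
    | zero => exact hk
    | succ m ih =>
      rw [Function.iterate_succ_apply']
      by_cases h : p^[m] k = r
      · rwa [h, hr, ← h]
      · exact hF _ ih h
  intro j hj
  obtain ⟨m, rfl⟩ := mem_rootPath.1 hj
  exact hiter m

lemma autPart_tree (hr : p r = r) (E : Finset α) :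
    autPart (fun i => if i = r then ∅ else {p i}) E = univ.filter (rootPath p · ⊆ E) := by
  apply autPart_eq_of_forall_subset
  · exact fun k hk => (mem_filter.1 hk).2 (self_mem_rootPath k)
  · rw [autonomous_tree_iff]
    intro k hk _
    simp only [mem_filter, mem_univ, true_and] at hk ⊢
    exact (rootPath_apply_subset k).trans hk
  · intro F hFE hF k hk
    simp only [mem_filter, mem_univ, true_and]
    exact (rootPath_subset_of_autonomous hr ((autonomous_tree_iff F).1 hF) hk).trans hFE

lemma proj_tree_additive (hr : p r = r) (c : α → ℝ) (E : Finset α) :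
    proj (fun i => if i = r then ∅ else {p i}) (fun E => ∑ i ∈ E, c i) E
      = ∑ k, c k * unanimity (rootPath p k) E := by
  simp only [proj, autPart_tree hr, sum_filter, unanimity, mul_ite, mul_one, mul_zero]

end Tree

theorem stmt11_general {α : Type*} [Fintype α] [DecidableEq α]
    (r : α) (p : α → α) (hr : p r = r)
    (S : α → Finset α) (hS : S = fun i => if i = r then ∅ else {p i})
    (d : α → ℕ) (hd0 : d r = 0) (hd : ∀ i : α, i ≠ r → d i = d (p i) + 1)
    (c : α → ℝ)
    (v : Finset α → ℝ) (hv : v = fun E => ∑ i ∈ E, c i) :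
    ∀ i : α,
      shapley (proj S v) i
        = ∑ k ∈ (univ : Finset α).filter (fun k => ∃ m : ℕ, p^[m] k = i),
            c k / (d k + 1) := by
  intro i
  subst hS hv
  rw [funext (proj_tree_additive hr c), shapley_sum_mul_unanimity]
  refine sum_congr (filter_congr fun k _ => mem_rootPath) fun k _ => ?_
  rw [card_rootPath hr hd0 hd]
  push_cast
  rfl

theorem stmt11 {α : Type*} [Fintype α] [DecidableEq α]
    (r : α) (p : α → α) (hr : p r = r)
    (hreach : ∀ i : α, ∃ k : ℕ, p^[k] i = r)
    (S : α → Finset α) (hS : S = fun i => if i = r then ∅ else {p i})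
    (d : α → ℕ) (hd0 : d r = 0) (hd : ∀ i : α, i ≠ r → d i = d (p i) + 1)
    (c : α → ℝ) (hc : ∀ i, 0 ≤ c i)
    (v : Finset α → ℝ) (hv : v = fun E => ∑ i ∈ E, c i) :
    ∀ i : α,
      shapley (proj S v) i
        = ∑ k ∈ (univ : Finset α).filter (fun k => ∃ m : ℕ, p^[m] k = i),
            c k / (d k + 1) :=
  stmt11_general r p hr S hS d hd0 hd c v hv
end

section
/- Let v be a monotone game on a rooted tree with tree permission structure, and let the mechanism assign each player the Shapley value of the projected game v'(E)=v(α(E)). Then the mechanism is efficient (rewards sum to v(N)) and diffusion incentive compatible: for any player i and any subset X of edges from i to its children, i's reward in the full tree is at least i's reward in the tree obtained by deleting X (and all players thereby disconnected from the root). -/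
open Finset
open scoped Classical

/-- The Shapley value of the game `v` restricted to the player set `M`
(via the Harsanyi-dividend formula). -/
noncomputable def shapleyOn {α : Type*} [DecidableEq α]
    (M : Finset α) (v : Finset α → ℝ) (i : α) : ℝ :=
  ∑ E ∈ M.powerset, if i ∈ E then dividend v E / E.card else 0

/-!
The projected game `w = v ∘ α` satisfies `w ∅ = 0` and `w N = v N`, so efficiency is
Möbius inversion of the Harsanyi dividends. For incentive compatibility let `M` be the set of
players that survive the deletion of `X`. Every player below `X` reaches the root only through
`i`, so for a coalition `E ∌ i` the autonomous part `α(E)` lies in `M` and `w E = w (E ∩ M)`.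
The Shapley value of `i` on `M` equals its Shapley value on `N` in the game `E ↦ w (E ∩ M)`,
whose players outside `M` are null; by monotonicity of `w`, each marginal contribution of `i`
to that game is at most its marginal contribution to `w`. As the Shapley value is the
combination `∑ B, |B|! (n - 1 - |B|)! / n! · (w (B ∪ {i}) - w B)` of marginal contributions
with nonnegative weights, the inequality follows.
-/

open Nat in
/-- The discrete form of the Beta integral `∫₀¹ tᵍ (1 - t)ᵈ dt`. -/
theorem sum_range_choose_mul_neg_one_pow_div (d g : ℕ) :
    ∑ j ∈ range (d + 1), (d.choose j : ℝ) * ((-1) ^ j / (g + 1 + j)) =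
      g ! * d ! / (g + d + 1)! := by
  induction d generalizing g with
  | zero =>
    rw [sum_range_one, factorial_succ]
    push_cast [choose_self, factorial_zero]
    field_simp
    ring
  | succ d ih =>
    rw [sum_choose_succ_mul (fun j _ => (-1 : ℝ) ^ j / (g + 1 + j)) d]
    have hshift :
        ∑ j ∈ range (d + 1), (d.choose j : ℝ) * ((-1) ^ (j + 1) / (g + 1 + (j + 1 : ℕ))) =
          -∑ j ∈ range (d + 1), (d.choose j : ℝ) * ((-1) ^ j / ((g + 1 : ℕ) + 1 + j)) := by
      rw [← sum_neg_distrib]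
      refine sum_congr rfl fun j _ => ?_
      push_cast
      ring
    rw [hshift, ih, ih, show g + 1 + d + 1 = g + d + 2 by ring,
      show g + (d + 1) + 1 = g + d + 2 by ring]
    have hfac : (g + d + 2)! = (g + d + 2) * (g + d + 1)! := factorial_succ _
    rw [hfac, factorial_succ d, factorial_succ g]
    push_cast
    field_simp
    ring

open Nat in
lemma sum_powerset_neg_one_pow_card_div {β : Type*} (T : Finset β) (g : ℕ) :
    ∑ H ∈ T.powerset, (-1 : ℝ) ^ H.card / (g + 1 + H.card) =
      g ! * T.card ! / (g + T.card + 1)! := by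
  rw [sum_powerset_apply_card (fun j => (-1 : ℝ) ^ j / (g + 1 + j))]
  simp only [nsmul_eq_mul]
  exact sum_range_choose_mul_neg_one_pow_div T.card g

open Nat in
noncomputable def shapleyWeight (b n : ℕ) : ℝ := b ! * (n - 1 - b)! / n !

lemma shapleyWeight_nonneg (b n : ℕ) : 0 ≤ shapleyWeight b n := by
  unfold shapleyWeight; positivity

section Dividend

variable {α : Type*} [DecidableEq α]

lemma sum_powerset_sum_powerset (s : Finset α) (f : Finset α → Finset α → ℝ) :
    ∑ A ∈ s.powerset, ∑ G ∈ A.powerset, f A G =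
      ∑ G ∈ s.powerset, ∑ H ∈ (s \ G).powerset, f (G ∪ H) G := by
  rw [sum_comm' (t' := s.powerset) (s' := fun G => Icc G s)
    fun A G => by
      simp only [mem_powerset, mem_Icc]
      exact ⟨fun ⟨hA, hG⟩ => ⟨⟨hG, hA⟩, hG.trans hA⟩, fun ⟨⟨hG, hA⟩, _⟩ => ⟨hA, hG⟩⟩]
  refine sum_congr rfl fun G hG => ?_
  rw [Icc_eq_image_powerset (mem_powerset.1 hG), sum_image]
  intro H₁ h₁ H₂ h₂ h
  simp only [coe_powerset, Set.mem_preimage, Set.mem_powerset_iff, coe_subset] at h₁ h₂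
  rw [← union_sdiff_cancel_left (disjoint_of_subset_right h₁ disjoint_sdiff),
    ← union_sdiff_cancel_left (disjoint_of_subset_right h₂ disjoint_sdiff (s := G))]
  exact congrArg (· \ G) h

lemma sum_powerset_dividend (u : Finset α → ℝ) (E : Finset α) :
    ∑ F ∈ E.powerset, dividend u F = u E := by
  simp only [dividend]
  rw [sum_powerset_sum_powerset]
  have inner : ∀ G ∈ E.powerset,
      ∑ H ∈ (E \ G).powerset, (-1 : ℝ) ^ ((G ∪ H).card - G.card) * u G =
        if G = E then u E else 0 := by
    intro G hG
    have hcard : ∀ H ∈ (E \ G).powerset, (G ∪ H).card - G.card = H.card := fun H hH => by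
      rw [card_union_of_disjoint (disjoint_of_subset_right (mem_powerset.1 hH) disjoint_sdiff)]
      omega
    have halt := congrArg (Int.cast : ℤ → ℝ) (sum_powerset_neg_one_pow_card (x := E \ G))
    push_cast at halt
    rw [sum_congr rfl fun H hH => by rw [hcard H hH], ← sum_mul, halt]
    by_cases hGE : G = E
    · simp [hGE]
    · have hEG : E \ G ≠ ∅ := fun h =>
        hGE ((mem_powerset.1 hG).antisymm (sdiff_eq_empty_iff_subset.1 h))
      rw [if_neg hEG, if_neg hGE, zero_mul]
  rw [sum_congr rfl inner, sum_ite_eq' _ _ (fun _ => u E), if_pos (mem_powerset_self E)]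

lemma dividend_insert (u : Finset α → ℝ) {i : α} {A : Finset α} (hiA : i ∉ A) :
    dividend u (insert i A) =
      ∑ G ∈ A.powerset, (-1 : ℝ) ^ (A.card - G.card) * (u (insert i G) - u G) := by
  simp only [dividend]
  rw [sum_powerset_insert hiA, card_insert_of_notMem hiA, ← sum_add_distrib]
  refine sum_congr rfl fun G hG => ?_
  have hGA := card_le_card (mem_powerset.1 hG)
  rw [card_insert_of_notMem fun h => hiA (mem_powerset.1 hG h),
    show A.card + 1 - G.card = A.card - G.card + 1 by omega,
    show A.card + 1 - (G.card + 1) = A.card - G.card by omega, pow_succ]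
  ring

lemma dividend_inter (u : Finset α → ℝ) (M E : Finset α) :
    dividend (fun F => u (F ∩ M)) E = if E ⊆ M then dividend u E else 0 := by
  split_ifs with hEM
  · refine sum_congr rfl fun F hF => ?_
    dsimp only
    rw [inter_eq_left.2 ((mem_powerset.1 hF).trans hEM)]
  · obtain ⟨x, hxE, hxM⟩ := not_subset.1 hEM
    rw [← insert_erase hxE, dividend_insert _ (notMem_erase x E)]
    exact sum_eq_zero fun G _ => by rw [insert_inter_of_notMem hxM, sub_self, mul_zero]

end Dividend

section ShapleyOn

variable {α : Type*} [DecidableEq α]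

lemma sum_shapleyOn (N : Finset α) (u : Finset α → ℝ) :
    ∑ i ∈ N, shapleyOn N u i = u N - u ∅ := by
  simp only [shapleyOn]
  rw [sum_comm]
  have hE : ∀ E ∈ N.powerset, ∑ i ∈ N, (if i ∈ E then dividend u E / E.card else 0) =
      dividend u E - if E = ∅ then u ∅ else 0 := by
    intro E hE
    rw [sum_ite_mem, inter_eq_right.2 (mem_powerset.1 hE), sum_const, nsmul_eq_mul]
    rcases E.eq_empty_or_nonempty with rfl | hne
    · simp [dividend]
    · rw [if_neg hne.ne_empty, sub_zero, mul_div_cancel₀ _ (by simpa using hne.ne_empty)]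
  rw [sum_congr rfl hE, sum_sub_distrib, sum_powerset_dividend, sum_ite_eq',
    if_pos (empty_mem_powerset N)]

lemma shapleyOn_eq_sum_marginal (N : Finset α) (u : Finset α → ℝ) {i : α} (hi : i ∈ N) :
    shapleyOn N u i =
      ∑ B ∈ (N.erase i).powerset, shapleyWeight B.card N.card * (u (insert i B) - u B) := by
  set s := N.erase i
  have hs : ∀ A ∈ s.powerset, i ∉ A := fun A hA h => notMem_erase i N (mem_powerset.1 hA h)
  have hcoalitions : shapleyOn N u i =
      ∑ A ∈ s.powerset, dividend u (insert i A) / (A.card + 1) := by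
    rw [shapleyOn, ← insert_erase hi, sum_powerset_insert (notMem_erase i N),
      sum_eq_zero fun A hA => if_neg (hs A hA), zero_add]
    exact sum_congr rfl fun A hA => by
      rw [if_pos (mem_insert_self i A), card_insert_of_notMem (hs A hA), Nat.cast_succ]
  have hsG : ∀ G ∈ s.powerset, ∀ H ∈ (s \ G).powerset, (G ∪ H).card = G.card + H.card :=
    fun G _ H hH =>
      card_union_of_disjoint (disjoint_of_subset_right (mem_powerset.1 hH) disjoint_sdiff)
  rw [hcoalitions]
  calc ∑ A ∈ s.powerset, dividend u (insert i A) / (A.card + 1)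
      = ∑ A ∈ s.powerset, ∑ G ∈ A.powerset,
          (-1 : ℝ) ^ (A.card - G.card) / (A.card + 1) * (u (insert i G) - u G) :=
        sum_congr rfl fun A hA => by
          rw [dividend_insert u (hs A hA), sum_div]
          exact sum_congr rfl fun G _ => by ring
    _ = ∑ G ∈ s.powerset, ∑ H ∈ (s \ G).powerset,
          (-1 : ℝ) ^ ((G ∪ H).card - G.card) / ((G ∪ H).card + 1) * (u (insert i G) - u G) :=
        sum_powerset_sum_powerset s _
    _ = ∑ G ∈ s.powerset, (∑ H ∈ (s \ G).powerset, (-1 : ℝ) ^ H.card / (G.card + 1 + H.card)) *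
          (u (insert i G) - u G) :=
        sum_congr rfl fun G hG => by
          rw [sum_mul]
          refine sum_congr rfl fun H hH => ?_
          rw [hsG G hG H hH, Nat.add_sub_cancel_left, Nat.cast_add]
          ring
    _ = _ := sum_congr rfl fun G hG => by
          have hGs := card_le_card (mem_powerset.1 hG)
          have hs : s.card = N.card - 1 := card_erase_of_mem hi
          have hN := card_pos.2 ⟨i, hi⟩
          rw [sum_powerset_neg_one_pow_card_div, card_sdiff_of_subset (mem_powerset.1 hG),
            shapleyWeight, show G.card + (s.card - G.card) + 1 = N.card by omega, hs]

lemma shapleyOn_le_of_marginal_le {N : Finset α} {u u' : Finset α → ℝ} {i : α} (hi : i ∈ N)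
    (h : ∀ B ⊆ N.erase i, u (insert i B) - u B ≤ u' (insert i B) - u' B) :
    shapleyOn N u i ≤ shapleyOn N u' i := by
  rw [shapleyOn_eq_sum_marginal N u hi, shapleyOn_eq_sum_marginal N u' hi]
  exact sum_le_sum fun B hB =>
    mul_le_mul_of_nonneg_left (h B (mem_powerset.1 hB)) (shapleyWeight_nonneg _ _)

lemma shapleyOn_inter {M N : Finset α} (hMN : M ⊆ N) (u : Finset α → ℝ) (i : α) :
    shapleyOn N (fun E => u (E ∩ M)) i = shapleyOn M u i := by
  simp only [shapleyOn, dividend_inter]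
  rw [← sum_subset (powerset_mono.2 hMN) fun E _ hE => by
    rw [if_neg (mt mem_powerset.2 hE), zero_div, ite_self]]
  exact sum_congr rfl fun E hE => by rw [if_pos (mem_powerset.1 hE)]

end ShapleyOn

section Permission

variable {α : Type*} [DecidableEq α] {S : α → Finset α}

lemma autPart_subset (E : Finset α) : autPart S E ⊆ E :=
  Finset.sup_le fun _ hF => mem_powerset.1 (mem_filter.1 hF).1

lemma subset_autPart {E F : Finset α} (hFE : F ⊆ E) (hF : autonomous S F) :
    F ⊆ autPart S E :=
  le_sup (f := id) (mem_filter.2 ⟨mem_powerset.2 hFE, hF⟩)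

lemma autonomous_autPart (E : Finset α) : autonomous S (autPart S E) := by
  intro k hk
  obtain ⟨F, hF, hkF⟩ := mem_sup.1 hk
  rw [mem_filter, mem_powerset] at hF
  exact (hF.2 k hkF).trans (subset_autPart hF.1 hF.2)

lemma autPart_mono {E F : Finset α} (h : E ⊆ F) : autPart S E ⊆ autPart S F :=
  subset_autPart ((autPart_subset E).trans h) (autonomous_autPart E)

lemma autPart_eq_of_autPart_subset {E F : Finset α} (hF : autPart S E ⊆ F) (hFE : F ⊆ E) :
    autPart S F = autPart S E :=
  (autPart_mono hFE).antisymm (subset_autPart hF (autonomous_autPart E))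

lemma autPart_empty : autPart S ∅ = ∅ :=
  subset_empty.1 (autPart_subset ∅)

lemma autPart_univ [Fintype α] : autPart S univ = univ :=
  (autPart_subset univ).antisymm (subset_autPart subset_rfl fun _ _ => subset_univ _)

variable {r : α} {p : α → α}

lemma iterate_mem_of_autonomous (hr : p r = r) (hS : S = fun i => if i = r then ∅ else {p i})
    {F : Finset α} (hF : autonomous S F) {k : α} (hk : k ∈ F) (m : ℕ) : p^[m] k ∈ F := by
  subst hS
  induction m with
  | zero => exact hk
  | succ m ih =>
    rw [Function.iterate_succ_apply']
    by_cases hmr : p^[m] k = r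
    · rwa [hmr, hr, ← hmr]
    · simpa [hmr] using hF _ ih

lemma iterate_notMem_of_mem_autPart (hr : p r = r)
    (hS : S = fun i => if i = r then ∅ else {p i}) {i : α} {X E : Finset α}
    (hX : ∀ j ∈ X, p j = i) (hi : i ∉ E) {k : α} (hk : k ∈ autPart S E) (m : ℕ) :
    p^[m] k ∉ X := fun hm => by
  have hpi := iterate_mem_of_autonomous hr hS (autonomous_autPart E) hk (m + 1)
  rw [Function.iterate_succ_apply', hX _ hm] at hpi
  exact hi (autPart_subset E hpi)

lemma proj_inter_of_notMem [Fintype α] (hr : p r = r)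
    (hS : S = fun i => if i = r then ∅ else {p i}) (v : Finset α → ℝ) {i : α}
    {X E : Finset α} (hX : ∀ j ∈ X, p j = i) (hi : i ∉ E) :
    proj S v (E ∩ univ.filter fun k => ∀ m : ℕ, p^[m] k ∉ X) = proj S v E := by
  rw [proj, autPart_eq_of_autPart_subset _ inter_subset_left, proj]
  exact subset_inter (autPart_subset E) fun k hk =>
    mem_filter.2 ⟨mem_univ k, iterate_notMem_of_mem_autPart hr hS hX hi hk⟩

end Permission

theorem stmt14_general {α : Type*} [Fintype α] [DecidableEq α]
    (r : α) (p : α → α) (hr : p r = r)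
    (S : α → Finset α) (hS : S = fun i => if i = r then ∅ else {p i})
    (v : Finset α → ℝ) (hv0 : v ∅ = 0)
    (hmono : ∀ E F : Finset α, E ⊆ F → v E ≤ v F) :
    -- efficiency
    (∑ i : α, shapleyOn univ (proj S v) i = v univ) ∧
    -- diffusion incentive compatibility: deleting any set `X` of edges from `i`
    -- to its children (removing all players disconnected from the root) never
    -- increases `i`'s reward
    (∀ i : α, ∀ X : Finset α,
      X ⊆ (univ : Finset α).filter (fun j => p j = i ∧ j ≠ r) →
      shapleyOn ((univ : Finset α).filter (fun k => ∀ m : ℕ, p^[m] k ∉ X)) (proj S v) i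
        ≤ shapleyOn univ (proj S v) i) := by
  refine ⟨?_, fun i X hX => ?_⟩
  · rw [sum_shapleyOn, proj, proj, autPart_univ, autPart_empty, hv0, sub_zero]
  · have hXi : ∀ j ∈ X, p j = i := fun j hj => (mem_filter.1 (hX hj)).2.1
    rw [← shapleyOn_inter (subset_univ _)]
    refine shapleyOn_le_of_marginal_le (mem_univ i) fun B hB => ?_
    have hiB : i ∉ B := fun h => notMem_erase i univ (hB h)
    rw [proj_inter_of_notMem hr hS v hXi hiB]
    exact sub_le_sub_right (hmono _ _ (autPart_mono inter_subset_left)) _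

theorem stmt14 {α : Type*} [Fintype α] [DecidableEq α]
    (r : α) (p : α → α) (hr : p r = r)
    (hreach : ∀ i : α, ∃ k : ℕ, p^[k] i = r)
    (S : α → Finset α) (hS : S = fun i => if i = r then ∅ else {p i})
    (v : Finset α → ℝ) (hv0 : v ∅ = 0)
    (hmono : ∀ E F : Finset α, E ⊆ F → v E ≤ v F) :
    -- efficiency
    (∑ i : α, shapleyOn univ (proj S v) i = v univ) ∧
    -- diffusion incentive compatibility: deleting any set `X` of edges from `i`
    -- to its children (removing all players disconnected from the root) never
    -- increases `i`'s reward
    (∀ i : α, ∀ X : Finset α,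
      X ⊆ (univ : Finset α).filter (fun j => p j = i ∧ j ≠ r) →
      shapleyOn ((univ : Finset α).filter (fun k => ∀ m : ℕ, p^[m] k ∉ X)) (proj S v) i
        ≤ shapleyOn univ (proj S v) i) :=
  stmt14_general r p hr S hS v hv0 hmono
end
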